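/- The variant Earley algorithm is correct: the string w = a_1⋯a_n is in the language of G if and only if [α] ∈ T_{0,n} for some production S → α ∈ P. -/

import Mathlib

/-! Formalization of Earley parsing and the Nederhof–Satta variant. -/

variable {T N : Type}

/-- A context-free grammar: a start nonterminal and a set of productions. -/
structure CFG (T N : Type) where
  initial : N
  rules : Set (N × List (Symbol T N))

/-- One rewriting step of the grammar. -/
def CFG.Produces (g : CFG T N) (u v : List (Symbol T N)) : Prop :=
  ∃ A α p q, (A, α) ∈ g.rules ∧ u = p ++ [Symbol.nonterminal A] ++ q ∧ v = p ++ α ++ q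

/-- The derivation relation ⇒* (reflexive-transitive closure of rewriting). -/
def CFG.Derives (g : CFG T N) : List (Symbol T N) → List (Symbol T N) → Prop :=
  Relation.ReflTransGen g.Produces

/-- The language of the grammar: { w | S ⇒* w }. -/
def CFG.language (g : CFG T N) : Set (List T) :=
  { w | g.Derives [Symbol.nonterminal g.initial] (w.map Symbol.terminal) }

/-- `inputSlice w i j` is the substring a_{i+1}⋯a_j of `w` (0-based: w[i..j)), as symbols. -/
def inputSlice (w : List T) (i j : ℕ) : List (Symbol T N) :=
  ((w.take j).drop i).map Symbol.terminal

/-- The least Earley table: `Earley g w A α β i j` means the dotted item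
[A → α • β] is inserted in E_{i,j}. -/
inductive Earley (g : CFG T N) (w : List T) :
    N → List (Symbol T N) → List (Symbol T N) → ℕ → ℕ → Prop where
  | init {α} : (g.initial, α) ∈ g.rules → Earley g w g.initial [] α 0 0
  | predict {B α A β i j γ} : Earley g w B α (Symbol.nonterminal A :: β) i j →
      (A, γ) ∈ g.rules → Earley g w A [] γ j j
  | scan {A α a β i j} : Earley g w A α (Symbol.terminal a :: β) i j →
      w[j]? = some a → Earley g w A (α ++ [Symbol.terminal a]) β i (j + 1)
  | complete {A α B β i k γ j} : Earley g w A α (Symbol.nonterminal B :: β) i k →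
      Earley g w B γ [] k j → (B, γ) ∈ g.rules →
      Earley g w A (α ++ [Symbol.nonterminal B]) β i j

mutual
  /-- Forward part of the variant: `VarU g w β j` means suffix item [β] ∈ U_j. -/
  inductive VarU (g : CFG T N) (w : List T) : List (Symbol T N) → ℕ → Prop where
    | init {α} : (g.initial, α) ∈ g.rules → VarU g w α 0
    | predict {A β j γ} : VarU g w (Symbol.nonterminal A :: β) j →
        (A, γ) ∈ g.rules → VarU g w γ j
    | scan {a β j} : VarU g w (Symbol.terminal a :: β) j → w[j]? = some a →
        VarU g w β (j + 1)
    | complete {B β k γ j} : VarU g w (Symbol.nonterminal B :: β) k → (B, γ) ∈ g.rules →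
        VarT g w γ k j → VarU g w β j

  /-- Backward part of the variant: `VarT g w β j m` means suffix item [β] ∈ T_{j,m}. -/
  inductive VarT (g : CFG T N) (w : List T) : List (Symbol T N) → ℕ → ℕ → Prop where
    | empty {m} : VarU g w [] m → VarT g w [] m m
    | scan {a β j m} : VarU g w (Symbol.terminal a :: β) j → w[j]? = some a →
        VarT g w β (j + 1) m → VarT g w (Symbol.terminal a :: β) j m
    | complete {B β k γ j m} : VarU g w (Symbol.nonterminal B :: β) k → (B, γ) ∈ g.rules →
        VarT g w γ k j → VarT g w β j m → VarT g w (Symbol.nonterminal B :: β) k m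
end

/-! Derivations of terminal words are the same as derivation trees (`CFG.Generates`), which
split along the symbols of a sentential form, so both directions are inductions. An item
`[β] ∈ T_{j,m}` yields a tree of `β` over the input between `j` and `m`. Conversely, if
`[β] ∈ U_j` and `β` has a tree over a prefix of the input after `j`, the tree rebuilds the
`T`-item: the first child of a nonterminal gets its `U`-item by prediction, each later sibling
by completion. -/

namespace CFG

variable {g : CFG T N}

inductive Generates (g : CFG T N) : List (Symbol T N) → List T → Prop
  | nil : g.Generates [] []
  | terminal {a β s} : g.Generates β s → g.Generates (.terminal a :: β) (a :: s)
  | nonterminal {B γ β s t} : (B, γ) ∈ g.rules → g.Generates γ s → g.Generates β t →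
      g.Generates (.nonterminal B :: β) (s ++ t)

lemma Produces.append_left {u v : List (Symbol T N)} (h : g.Produces u v)
    (p : List (Symbol T N)) : g.Produces (p ++ u) (p ++ v) := by
  obtain ⟨A, α, p', q', hr, rfl, rfl⟩ := h
  exact ⟨A, α, p ++ p', q', hr, by simp, by simp⟩

lemma Produces.append_right {u v : List (Symbol T N)} (h : g.Produces u v)
    (q : List (Symbol T N)) : g.Produces (u ++ q) (v ++ q) := by
  obtain ⟨A, α, p', q', hr, rfl, rfl⟩ := h
  exact ⟨A, α, p', q' ++ q, hr, by simp, by simp⟩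

lemma Derives.append {u v u' v' : List (Symbol T N)} (h : g.Derives u v)
    (h' : g.Derives u' v') : g.Derives (u ++ u') (v ++ v') :=
  (Relation.ReflTransGen.lift (· ++ u') (fun _ _ hp => Produces.append_right hp u') _ _ h).trans
    (Relation.ReflTransGen.lift (v ++ ·) (fun _ _ hp => Produces.append_left hp v) _ _ h')

lemma Generates.derives {β : List (Symbol T N)} {s : List T} (h : g.Generates β s) :
    g.Derives β (s.map .terminal) := by
  induction h with
  | nil => exact .refl
  | @terminal a _ _ _ ih => exact Derives.append (u := [.terminal a]) .refl ih
  | @nonterminal B γ β _ _ hr _ _ ihγ ihβ =>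
    have hstep : g.Produces (.nonterminal B :: β) (γ ++ β) :=
      ⟨B, γ, [], β, hr, rfl, rfl⟩
    rw [List.map_append]
    exact Relation.ReflTransGen.head hstep (ihγ.append ihβ)

lemma generates_map_terminal (s : List T) : g.Generates (s.map .terminal) s := by
  induction s with
  | nil => exact .nil
  | cons a s ih => exact .terminal ih

lemma generates_append_iff {x y : List (Symbol T N)} {u : List T} :
    g.Generates (x ++ y) u ↔ ∃ s t, u = s ++ t ∧ g.Generates x s ∧ g.Generates y t := by
  induction x generalizing u with
  | nil => exact ⟨fun h => ⟨[], u, rfl, .nil, h⟩, by rintro ⟨_, t, rfl, ⟨⟩, h⟩; exact h⟩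
  | cons X x ih =>
    constructor
    · intro h
      cases h with
      | terminal h =>
        obtain ⟨s, t, rfl, hs, ht⟩ := ih.mp h
        exact ⟨_ :: s, t, rfl, .terminal hs, ht⟩
      | nonterminal hr hγ h =>
        obtain ⟨s, t, rfl, hs, ht⟩ := ih.mp h
        exact ⟨_ ++ s, t, by simp, .nonterminal hr hγ hs, ht⟩
    · rintro ⟨_, t, rfl, hs, ht⟩
      cases hs with
      | terminal hs => exact .terminal (ih.mpr ⟨_, t, rfl, hs, ht⟩)
      | nonterminal hr hγ hs =>
        simpa using Generates.nonterminal hr hγ (ih.mpr ⟨_, t, rfl, hs, ht⟩)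

lemma generates_singleton_nonterminal_iff {B : N} {u : List T} :
    g.Generates [.nonterminal B] u ↔ ∃ γ, (B, γ) ∈ g.rules ∧ g.Generates γ u := by
  constructor
  · intro h
    cases h with
    | nonterminal hr hγ hnil => cases hnil; exact ⟨_, hr, by simpa using hγ⟩
  · rintro ⟨γ, hr, hγ⟩
    simpa using Generates.nonterminal hr hγ .nil

lemma Generates.of_produces {u v : List (Symbol T N)} {s : List T} (huv : g.Produces u v)
    (hv : g.Generates v s) : g.Generates u s := by
  obtain ⟨A, α, p, q, hr, rfl, rfl⟩ := huv
  obtain ⟨s₁, s₂, rfl, hpα, hq⟩ := generates_append_iff.mp hv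
  obtain ⟨s₁, s₂, rfl, hp, hα⟩ := generates_append_iff.mp hpα
  have hA : g.Generates [.nonterminal A] s₂ := generates_singleton_nonterminal_iff.mpr ⟨α, hr, hα⟩
  exact generates_append_iff.mpr ⟨_, _, rfl, generates_append_iff.mpr ⟨_, _, rfl, hp, hA⟩, hq⟩

lemma derives_iff_generates {β : List (Symbol T N)} {s : List T} :
    g.Derives β (s.map .terminal) ↔ g.Generates β s := by
  refine ⟨fun h => ?_, Generates.derives⟩
  induction h using Relation.ReflTransGen.head_induction_on with
  | refl => exact generates_map_terminal s
  | head huv _ ih => exact ih.of_produces huv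

lemma mem_language_iff {w : List T} :
    w ∈ g.language ↔ ∃ α, (g.initial, α) ∈ g.rules ∧ g.Generates α w :=
  derives_iff_generates.trans generates_singleton_nonterminal_iff

end CFG

section Variant

variable {g : CFG T N} {w : List T}

theorem VarT.exists_generates : ∀ {β : List (Symbol T N)} {j m : ℕ}, VarT g w β j m →
    ∃ s, g.Generates β s ∧ s ++ w.drop m = w.drop j
  | _, _, _, .empty _ => ⟨[], .nil, rfl⟩
  | _, _, _, .scan _ ha hT => by
    obtain ⟨s, hs, hdrop⟩ := hT.exists_generates
    obtain ⟨hj, rfl⟩ := List.getElem?_eq_some_iff.mp ha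
    exact ⟨_ :: s, .terminal hs, by rw [List.cons_append, hdrop, List.drop_eq_getElem_cons hj]⟩
  | _, _, _, .complete _ hr hγ hβ => by
    obtain ⟨s, hs, hdrop_s⟩ := hγ.exists_generates
    obtain ⟨t, ht, hdrop_t⟩ := hβ.exists_generates
    exact ⟨s ++ t, .nonterminal hr hs ht, by rw [List.append_assoc, hdrop_t, hdrop_s]⟩

theorem VarT.of_generates {β : List (Symbol T N)} {s r : List T} {j : ℕ}
    (hU : VarU g w β j) (hs : g.Generates β s) (hdrop : s ++ r = w.drop j) :
    VarT g w β j (j + s.length) := by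
  induction hs generalizing j r with
  | nil => exact .empty hU
  | @terminal a β s _ ih =>
    have ha : w[j]? = some a := by
      rw [← Nat.add_zero j, ← List.getElem?_drop, ← hdrop]; rfl
    have hdrop' : s ++ r = w.drop (j + 1) := by
      rw [← List.drop_drop, ← hdrop]; rfl
    have hT := ih (VarU.scan hU ha) hdrop'
    rw [List.length_cons, Nat.add_comm _ 1, ← Nat.add_assoc]
    exact .scan hU ha hT
  | @nonterminal B γ β s t hr _ _ ihγ ihβ =>
    rw [List.append_assoc] at hdrop
    have hdrop' : t ++ r = w.drop (j + s.length) := by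
      rw [← List.drop_drop, ← hdrop, List.drop_left]
    have hγ := ihγ (VarU.predict hU hr) hdrop
    have hβ := ihβ (VarU.complete hU hr hγ) hdrop'
    rw [List.length_append, ← Nat.add_assoc]
    exact .complete hU hr hγ hβ

end Variant

/-- the variant is correct: w ∈ L(G) iff [α] ∈ T_{0,n} for some S → α ∈ P. -/
theorem variant_correct (g : CFG T N) (w : List T) :
    w ∈ g.language ↔
      ∃ α, (g.initial, α) ∈ g.rules ∧ VarT g w α 0 w.length := by
  rw [CFG.mem_language_iff]
  constructor
  · rintro ⟨α, hr, hα⟩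
    exact ⟨α, hr, by simpa using VarT.of_generates (r := []) (.init hr) hα (by simp)⟩
  · rintro ⟨α, hr, hT⟩
    obtain ⟨s, hs, hdrop⟩ := hT.exists_generates
    obtain rfl : s = w := by simpa using hdrop
    exact ⟨α, hr, hs⟩
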